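/- arXiv:1402.1993 — 3 statements merged into one kernel-verified Lean document; each statement's English description precedes it below -/
import Mathlib

section
/- The map A is a contraction on the triangle T with Lipschitz constant √3/2: for all p₁, p₂ ∈ T, |A p₁ − A p₂| ≤ (√3/2)|p₁ − p₂| in the Euclidean norm. -/
/-!
Put `u = k - k'`, `v = l - l'`, `c = k' + 1`. Over the common denominator `2 (k + 1) c`, the
differences of the two coordinates of `A` are `u` and `c v - l' u`. Since `(c v - l' u)² ≤
2 c² v² + 2 l'² u²` and `|l'| ≤ 1 ≤ c ≤ k + 1`, the squared numerators sum to at most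
`3 (k + 1)² c² (u² + v²)`, i.e. three quarters of the squared denominator times `|p₁ - p₂|²`.
-/

noncomputable def expA (p : ℝ × ℝ) : ℝ × ℝ :=
  (p.1 / (2 * (p.1 + 1)), (p.1 + p.2 + 1) / (2 * (p.1 + 1)))

def T : Set (ℝ × ℝ) :=
  {p | 0 ≤ p.1 ∧ p.1 ≤ 1/2 ∧ 1/2 ≤ p.2 ∧ p.2 ≤ 1 ∧ p.1 + p.2 ≤ 1}

section

variable {p q : ℝ × ℝ}

lemma expA_fst_sub (hp : p.1 + 1 ≠ 0) (hq : q.1 + 1 ≠ 0) :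
    (expA p).1 - (expA q).1 = (p.1 - q.1) / (2 * (p.1 + 1) * (q.1 + 1)) := by
  simp only [expA]
  field_simp
  ring

lemma expA_snd_sub (hp : p.1 + 1 ≠ 0) (hq : q.1 + 1 ≠ 0) :
    (expA p).2 - (expA q).2 =
      ((q.1 + 1) * (p.2 - q.2) - q.2 * (p.1 - q.1)) / (2 * (p.1 + 1) * (q.1 + 1)) := by
  simp only [expA]
  field_simp
  ring

lemma sq_add_sq_sub_le {u v c l : ℝ} (hc : 1 ≤ c) (hl : l ^ 2 ≤ 1) :
    u ^ 2 + (c * v - l * u) ^ 2 ≤ 3 * c ^ 2 * (u ^ 2 + v ^ 2) :=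
  calc u ^ 2 + (c * v - l * u) ^ 2
      ≤ u ^ 2 + (2 * c ^ 2 * v ^ 2 + 2 * l ^ 2 * u ^ 2) := by
        nlinarith [sq_nonneg (c * v + l * u)]
    _ ≤ 3 * u ^ 2 + 2 * c ^ 2 * v ^ 2 := by nlinarith [sq_nonneg u]
    _ ≤ 3 * c ^ 2 * (u ^ 2 + v ^ 2) := by
        have hc2 : 1 ≤ c ^ 2 := by nlinarith
        nlinarith [mul_nonneg (sub_nonneg.2 hc2) (sq_nonneg u),
          mul_nonneg (sq_nonneg c) (sq_nonneg v)]

lemma expA_dist_sq_le (hp : 0 ≤ p.1) (hq : 0 ≤ q.1) (hq₂ : q.2 ^ 2 ≤ 1) :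
    ((expA p).1 - (expA q).1) ^ 2 + ((expA p).2 - (expA q).2) ^ 2 ≤
      3 / 4 * ((p.1 - q.1) ^ 2 + (p.2 - q.2) ^ 2) := by
  have hp' : p.1 + 1 ≠ 0 := by positivity
  have hq' : q.1 + 1 ≠ 0 := by positivity
  have hd : 0 < (2 * (p.1 + 1) * (q.1 + 1)) ^ 2 := by positivity
  rw [expA_fst_sub hp' hq', expA_snd_sub hp' hq', div_pow, div_pow, ← add_div,
    div_le_iff₀ hd]
  have hc : 1 ≤ q.1 + 1 := by linarith
  have hpc : 1 ≤ (p.1 + 1) ^ 2 := by nlinarith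
  calc (p.1 - q.1) ^ 2 + ((q.1 + 1) * (p.2 - q.2) - q.2 * (p.1 - q.1)) ^ 2
      ≤ 3 * (q.1 + 1) ^ 2 * ((p.1 - q.1) ^ 2 + (p.2 - q.2) ^ 2) := sq_add_sq_sub_le hc hq₂
    _ ≤ 3 * (q.1 + 1) ^ 2 * ((p.1 - q.1) ^ 2 + (p.2 - q.2) ^ 2) * (p.1 + 1) ^ 2 :=
        le_mul_of_one_le_right (by positivity) hpc
    _ = 3 / 4 * ((p.1 - q.1) ^ 2 + (p.2 - q.2) ^ 2) * (2 * (p.1 + 1) * (q.1 + 1)) ^ 2 := by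
        ring

end

theorem stmt_2 (p₁ p₂ : ℝ × ℝ) (h₁ : p₁ ∈ T) (h₂ : p₂ ∈ T) :
    Real.sqrt (((expA p₁).1 - (expA p₂).1)^2 + ((expA p₁).2 - (expA p₂).2)^2)
      ≤ (Real.sqrt 3 / 2) *
        Real.sqrt ((p₁.1 - p₂.1)^2 + (p₁.2 - p₂.2)^2) := by
  obtain ⟨hp₁, -⟩ := h₁
  obtain ⟨hp₂, -, hl₀, hl₁, -⟩ := h₂
  have hsq : p₂.2 ^ 2 ≤ 1 := by nlinarith
  rw [Real.sqrt_le_iff, mul_pow, div_pow, Real.sq_sqrt (by norm_num),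
    Real.sq_sqrt (by positivity)]
  exact ⟨by positivity, by linarith [expA_dist_sq_le hp₁ hp₂ hsq]⟩
end

section
/- The map BA = B ∘ A is a contraction on the triangle T with Lipschitz constant √3/2: for all p₁, p₂ ∈ T, |BA p₁ − BA p₂| ≤ (√3/2)|p₁ − p₂|. -/
noncomputable def expB (p : ℝ × ℝ) : ℝ × ℝ := (p.2 - 1/2, p.1 + 1/2)

noncomputable def expBA (p : ℝ × ℝ) : ℝ × ℝ := expB (expA p)

/-!
Writing `a = k + 1`, the map is `A (k, l) = (1/2 - 1/(2a), 1/2 + l/(2a))`, so for two points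
`A p - A q = (Δk, Δl·a' - l'·Δk) / (2 a a')`. By Lagrange's identity
`(Δl·a' - l'·Δk)² ≤ (a'² + l'²)(Δk² + Δl²)`, and `1 + a'² + l'² ≤ 3a'²` as soon as `a' ≥ 1` and
`|l'| ≤ 1`; with `a ≥ 1` this gives `|A p - A q|² ≤ (3/4)|p - q|²`. The map `B` is a translation
composed with the swap of coordinates, hence an isometry.
-/

/-- `dist` on `ℝ × ℝ` is the sup metric, so the squared Euclidean distance is spelled out. -/
def sqDist (p q : ℝ × ℝ) : ℝ := (p.1 - q.1) ^ 2 + (p.2 - q.2) ^ 2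

lemma sqDist_expB (p q : ℝ × ℝ) : sqDist (expB p) (expB q) = sqDist p q := by
  simp only [sqDist, expB]
  ring

lemma sq_add_sq_sub_mul_le {u v b l : ℝ} (hb : 1 ≤ b) (hl : l ^ 2 ≤ 1) :
    u ^ 2 + (v * b - l * u) ^ 2 ≤ 3 * b ^ 2 * (u ^ 2 + v ^ 2) := by
  have lagrange : (v * b - l * u) ^ 2 + (v * l + b * u) ^ 2 = (b ^ 2 + l ^ 2) * (u ^ 2 + v ^ 2) := by
    ring
  nlinarith [sq_nonneg (v * l + b * u), sq_nonneg v, mul_nonneg (add_nonneg (sq_nonneg u)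
    (sq_nonneg v)) (by nlinarith : 0 ≤ 2 * b ^ 2 - 1 - l ^ 2)]

lemma sqDist_expA {p q : ℝ × ℝ} (hp : p.1 + 1 ≠ 0) (hq : q.1 + 1 ≠ 0) :
    sqDist (expA p) (expA q) =
      ((p.1 - q.1) ^ 2 + ((p.2 - q.2) * (q.1 + 1) - q.2 * (p.1 - q.1)) ^ 2) /
        (4 * (p.1 + 1) ^ 2 * (q.1 + 1) ^ 2) := by
  simp only [sqDist, expA]
  field_simp
  ring

lemma sqDist_expA_le {p q : ℝ × ℝ} (hp : 0 ≤ p.1) (hq : 0 ≤ q.1) (hl : q.2 ^ 2 ≤ 1) :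
    sqDist (expA p) (expA q) ≤ 3 / 4 * sqDist p q := by
  have ha : 1 ≤ p.1 + 1 := by linarith
  have hb : 1 ≤ q.1 + 1 := by linarith
  rw [sqDist_expA (by positivity) (by positivity), div_le_iff₀ (by positivity)]
  have hd : 0 ≤ sqDist p q := by unfold sqDist; positivity
  calc _ ≤ 3 * (q.1 + 1) ^ 2 * sqDist p q := sq_add_sq_sub_mul_le hb hl
    _ ≤ 3 * (q.1 + 1) ^ 2 * sqDist p q * (p.1 + 1) ^ 2 :=
        le_mul_of_one_le_right (by positivity) (one_le_pow₀ ha)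
    _ = _ := by ring

lemma sqrt_sqDist_expBA_le {p q : ℝ × ℝ} (hp : 0 ≤ p.1) (hq : 0 ≤ q.1) (hl : q.2 ^ 2 ≤ 1) :
    √(sqDist (expBA p) (expBA q)) ≤ √3 / 2 * √(sqDist p q) := by
  calc √(sqDist (expBA p) (expBA q)) ≤ √(3 / 4 * sqDist p q) := by
        rw [expBA, expBA, sqDist_expB]
        exact Real.sqrt_le_sqrt (sqDist_expA_le hp hq hl)
    _ = √3 / 2 * √(sqDist p q) := by
        rw [Real.sqrt_mul (by norm_num), Real.sqrt_div' _ (by norm_num : (0 : ℝ) ≤ 4),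
          show (4 : ℝ) = 2 ^ 2 by norm_num, Real.sqrt_sq (by norm_num)]

theorem stmt_3 (p₁ p₂ : ℝ × ℝ) (h₁ : p₁ ∈ T) (h₂ : p₂ ∈ T) :
    Real.sqrt (((expBA p₁).1 - (expBA p₂).1)^2 + ((expBA p₁).2 - (expBA p₂).2)^2)
      ≤ (Real.sqrt 3 / 2) *
        Real.sqrt ((p₁.1 - p₂.1)^2 + (p₁.2 - p₂.2)^2) := by
  obtain ⟨hk₁, -⟩ := h₁
  obtain ⟨hk₂, -, hl₂, hl₂', -⟩ := h₂
  exact sqrt_sqDist_expBA_le hk₁ hk₂ (by nlinarith)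
end

section
/- For any p₁ in P' = (0,1/6)×(2/3,1) ∪ (1/6,1/2)×(1/2,2/3) ∪ {(1/6,2/3)} and any p₂ in the same set, A p₁ ≺ (1/6,2/3) ≺ BA p₂, where (k,l) ≺ (κ,λ) means k < κ and l > λ. -/
def S : Set (ℝ × ℝ) :=
  {(1/6, 2/3)} ∪ Set.Ioo (0:ℝ) (1/6) ×ˢ Set.Ioo (2/3 : ℝ) 1
    ∪ Set.Ioo (1/6 : ℝ) (1/2) ×ˢ Set.Ioo (1/2 : ℝ) (2/3)

lemma expA_fst_lt {p : ℝ × ℝ} (h₀ : -1 < p.1) (h : p.1 < 1/2) : (expA p).1 < 1/6 := by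
  rw [expA, div_lt_iff₀ (by linarith)]
  linarith

lemma lt_expA_snd {p : ℝ × ℝ} (h₀ : -1 < p.1) (h : p.1 + 1 < 3 * p.2) : 2/3 < (expA p).2 := by
  rw [expA, lt_div_iff₀ (by linarith)]
  linarith

lemma bounds_of_mem_S {p : ℝ × ℝ} (hp : p ∈ S) :
    -1 < p.1 ∧ p.1 < 1/2 ∧ p.1 + 1 < 3 * p.2 := by
  rcases hp with (rfl | ⟨⟨hk₀, hk₁⟩, hl₀, -⟩) | ⟨⟨hk₀, hk₁⟩, hl₀, -⟩
  · norm_num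
  all_goals exact ⟨by linarith, by linarith, by linarith⟩

lemma expA_lt_of_mem_S {p : ℝ × ℝ} (hp : p ∈ S) : (expA p).1 < 1/6 ∧ 2/3 < (expA p).2 :=
  have ⟨h₀, hk, hkl⟩ := bounds_of_mem_S hp
  ⟨expA_fst_lt h₀ hk, lt_expA_snd h₀ hkl⟩

theorem stmt_11 (p₁ p₂ : ℝ × ℝ) (h₁ : p₁ ∈ S) (h₂ : p₂ ∈ S) :
    ((expA p₁).1 < 1/6 ∧ (expA p₁).2 > 2/3) ∧
      (1/6 < (expBA p₂).1 ∧ 2/3 > (expBA p₂).2) := by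
  obtain ⟨hA₁, hA₂⟩ := expA_lt_of_mem_S h₂
  refine ⟨expA_lt_of_mem_S h₁, ?_, ?_⟩ <;> simp only [expBA, expB] <;> linarith
end
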